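/- arXiv:1310.5092 — 8 statements merged into one kernel-verified Lean document; each statement's English description precedes it below -/
import Mathlib

section
/- Let N ∈ ℕ, h = 1/(N+1), and let v, g be real discrete functions on {0,…,N+1} with v_0 = v_{N+1} = 0. Then 2·h·∑_{j=1}^{N} g_j·v_j·(v_{j+1}−v_{j−1})/(2h) = −h·∑_{j=1}^{N} v_j²·(g_{j+1}−g_{j−1})/(2h) + (h²/2)·h·∑_{j=0}^{N} ((v_{j+1}−v_j)/h)²·(g_{j+1}−g_j)/h. -/
open Finset

/-- The last two terms are the end terms left over by shifting `j ↦ j + 1` in the sums of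
`g j * v j * v (j - 1)` and of `v j ^ 2 * (g j - g (j - 1))`. -/
theorem summation_by_parts_centered {R : Type*} [CommRing R] (v g : ℕ → R) (N : ℕ) :
    2 * ∑ j ∈ Icc 1 N, g j * v j * (v (j + 1) - v (j - 1))
        + ∑ j ∈ Icc 1 N, v j ^ 2 * (g (j + 1) - g (j - 1))
      = ∑ j ∈ range (N + 1), (v (j + 1) - v j) ^ 2 * (g (j + 1) - g j)
        - (2 * g 0 * v 0 * v 1 + v 0 ^ 2 * (g 1 - g 0))
        + (2 * g (N + 1) * v (N + 1) * v N - v (N + 1) ^ 2 * (g (N + 1) - g N)) := by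
  induction N with
  | zero => simp only [Icc_eq_empty_of_lt zero_lt_one, sum_empty, zero_add, sum_range_one]; ring
  | succ n ih =>
    rw [sum_Icc_succ_top (by omega), sum_Icc_succ_top (by omega), sum_range_succ,
      Nat.add_sub_cancel]
    linear_combination ih

theorem summation_by_parts_centered_of_boundary_zero {R : Type*} [CommRing R] (v g : ℕ → R)
    (N : ℕ) (hv0 : v 0 = 0) (hvN : v (N + 1) = 0) :
    2 * ∑ j ∈ Icc 1 N, g j * v j * (v (j + 1) - v (j - 1))
      = -∑ j ∈ Icc 1 N, v j ^ 2 * (g (j + 1) - g (j - 1))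
        + ∑ j ∈ range (N + 1), (v (j + 1) - v j) ^ 2 * (g (j + 1) - g j) := by
  have := summation_by_parts_centered v g N
  simp only [hv0, hvN] at this
  linear_combination this

theorem stmt1_general (N : ℕ) (h : ℝ) (v g : ℕ → ℝ)
    (hv0 : v 0 = 0) (hvN : v (N+1) = 0) :
    2 * h * ∑ j ∈ Finset.Icc 1 N, g j * v j * (v (j+1) - v (j-1))/(2*h)
      = -(h * ∑ j ∈ Finset.Icc 1 N, (v j)^2 * (g (j+1) - g (j-1))/(2*h))
        + (h^2/2) * (h * ∑ j ∈ Finset.range (N+1), ((v (j+1) - v j)/h)^2 * ((g (j+1) - g j)/h)) := by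
  -- At `h = 0` both sides vanish since `x / 0 = 0`; otherwise every power of `h` cancels.
  rcases eq_or_ne h 0 with rfl | _
  · simp
  simp only [div_pow, div_mul_div_comm, ← sum_div]
  field_simp
  linear_combination summation_by_parts_centered_of_boundary_zero v g N hv0 hvN

theorem stmt1 (N : ℕ) (h : ℝ) (hh : h = 1/(N+1)) (v g : ℕ → ℝ)
    (hv0 : v 0 = 0) (hvN : v (N+1) = 0) :
    2 * h * ∑ j ∈ Finset.Icc 1 N, g j * v j * (v (j+1) - v (j-1))/(2*h)
      = -(h * ∑ j ∈ Finset.Icc 1 N, (v j)^2 * (g (j+1) - g (j-1))/(2*h))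
        + (h^2/2) * (h * ∑ j ∈ Finset.range (N+1), ((v (j+1) - v j)/h)^2 * ((g (j+1) - g j)/h)) :=
  stmt1_general N h v g hv0 hvN
end

section
/- Let N ∈ ℕ, h = 1/(N+1), and let v, g be real discrete functions on {0,…,N+1} with v_0 = v_{N+1} = 0. Then h·∑_{j=1}^{N} g_j·v_j·(v_{j+1}−2v_j+v_{j−1})/h² = −h·∑_{j=0}^{N} ((v_{j+1}−v_j)/h)²·(g_{j+1}+g_j)/2 + (1/2)·h·∑_{j=1}^{N} v_j²·(g_{j+1}−2g_j+g_{j−1})/h². -/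
/-!
Discrete analogue of integrating `g v v'' = (g v v' - ½ g' v²)' - g v'² + ½ g'' v²` over an
interval where `v` vanishes at both ends: the summand telescopes up to the two remaining
sums, and the boundary terms vanish because `v₀ = v_{N+1} = 0`.
-/

open Finset

variable {K : Type*} [Field K]

/-- Discrete analogue of `g v v' - ½ g' v²`. -/
def secondDiffFlux (v g : ℕ → K) (j : ℕ) : K :=
  g j * v j * (v j - v (j - 1)) - (g j - g (j - 1)) / 2 * v j ^ 2

lemma mul_secondDiff_eq [CharZero K] (v g : ℕ → K) {j : ℕ} (hj : 1 ≤ j) :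
    g j * v j * (v (j + 1) - 2 * v j + v (j - 1))
      = -((v (j + 1) - v j) ^ 2 * ((g (j + 1) + g j) / 2))
        + 1 / 2 * (v j ^ 2 * (g (j + 1) - 2 * g j + g (j - 1)))
        + (secondDiffFlux v g (j + 1) - secondDiffFlux v g j) := by
  obtain ⟨k, rfl⟩ := Nat.exists_eq_add_of_le' hj
  simp only [secondDiffFlux, Nat.add_sub_cancel]
  ring

lemma sum_mul_secondDiff_eq [CharZero K] (v g : ℕ → K) (N : ℕ) (hv0 : v 0 = 0)
    (hvN : v (N + 1) = 0) :
    ∑ j ∈ Icc 1 N, g j * v j * (v (j + 1) - 2 * v j + v (j - 1))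
      = -∑ j ∈ range (N + 1), (v (j + 1) - v j) ^ 2 * ((g (j + 1) + g j) / 2)
        + 1 / 2 * ∑ j ∈ Icc 1 N, v j ^ 2 * (g (j + 1) - 2 * g j + g (j - 1)) := by
  have htelescope : ∑ j ∈ Icc 1 N, (secondDiffFlux v g (j + 1) - secondDiffFlux v g j)
      = -((v 1 - v 0) ^ 2 * ((g 1 + g 0) / 2)) := by
    rw [← Ico_add_one_right_eq_Icc, sum_Ico_sub _ (by omega)]
    simp only [secondDiffFlux, Nat.add_sub_cancel, Nat.sub_self, hv0, hvN]
    ring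
  rw [sum_congr rfl fun j hj => mul_secondDiff_eq v g (mem_Icc.mp hj).1, sum_add_distrib,
    sum_add_distrib, htelescope, sum_neg_distrib, ← mul_sum, sum_range_eq_add_Ico _ N.succ_pos,
    Nat.succ_eq_add_one, Ico_add_one_right_eq_Icc]
  ring

theorem stmt2_general (N : ℕ) (h : ℝ) (v g : ℕ → ℝ)
    (hv0 : v 0 = 0) (hvN : v (N+1) = 0) :
    h * ∑ j ∈ Finset.Icc 1 N, g j * v j * (v (j+1) - 2*v j + v (j-1))/h^2
      = -(h * ∑ j ∈ Finset.range (N+1), ((v (j+1) - v j)/h)^2 * ((g (j+1) + g j)/2))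
        + (1/2) * (h * ∑ j ∈ Finset.Icc 1 N, (v j)^2 * (g (j+1) - 2*g j + g (j-1))/h^2) := by
  simp only [div_pow, div_mul_eq_mul_div, ← sum_div]
  rw [sum_mul_secondDiff_eq v g N hv0 hvN]
  ring

theorem stmt2 (N : ℕ) (h : ℝ) (hh : h = 1/(N+1)) (v g : ℕ → ℝ)
    (hv0 : v 0 = 0) (hvN : v (N+1) = 0) :
    h * ∑ j ∈ Finset.Icc 1 N, g j * v j * (v (j+1) - 2*v j + v (j-1))/h^2
      = -(h * ∑ j ∈ Finset.range (N+1), ((v (j+1) - v j)/h)^2 * ((g (j+1) + g j)/2))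
        + (1/2) * (h * ∑ j ∈ Finset.Icc 1 N, (v j)^2 * (g (j+1) - 2*g j + g (j-1))/h^2) :=
  stmt2_general N h v g hv0 hvN
end

section
/- Let N ∈ ℕ, h = 1/(N+1), and let v, g be real discrete functions on {0,…,N+1} with v_0 = v_{N+1} = 0. Then h·∑_{j=1}^{N} g_j·((v_{j+1}−2v_j+v_{j−1})/h²)·((v_{j+1}−v_{j−1})/(2h)) = −(1/2)·h·∑_{j=0}^{N} ((v_{j+1}−v_j)/h)²·(g_{j+1}−g_j)/h + (1/2)·((v_{N+1}−v_N)/h)²·g_{N+1} − (1/2)·((v_1−v_0)/h)²·g_0. -/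
/-!
With `a j = (v (j+1) - v j) / h` one has `Δ_h v j = (a j - a (j-1)) / h` and
`∂_h v j = (a j + a (j-1)) / 2`, so `h * g j * Δ_h v j * ∂_h v j = g j * (a j ^ 2 - a (j-1) ^ 2) / 2`.
Summation by parts moves the difference onto `g` and leaves the two boundary terms.
-/

open Finset

theorem sum_Icc_mul_sub_pred_by_parts {R : Type*} [CommRing R] (g b : ℕ → R) (N : ℕ) :
    ∑ j ∈ Icc 1 N, g j * (b j - b (j - 1))
      = g (N + 1) * b N - g 0 * b 0 - ∑ j ∈ range (N + 1), (g (j + 1) - g j) * b j := by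
  induction N with
  | zero => simp; ring
  | succ n ih =>
    rw [sum_Icc_succ_top (by omega), ih, sum_range_succ _ (n + 1), Nat.add_sub_cancel]
    ring

theorem mul_laplacian_mul_centered_diff {K : Type*} [Field K] (h a b c : K) (hh : h ≠ 0) :
    h * ((c - 2 * b + a) / h ^ 2 * ((c - a) / (2 * h)))
      = (((c - b) / h) ^ 2 - ((b - a) / h) ^ 2) / 2 := by
  field_simp
  ring

theorem stmt3_general (N : ℕ) (h : ℝ) (hh : h = 1/(N+1)) (v g : ℕ → ℝ) :
    h * ∑ j ∈ Finset.Icc 1 N, g j * ((v (j+1) - 2*v j + v (j-1))/h^2) * ((v (j+1) - v (j-1))/(2*h))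
      = -(1/2) * (h * ∑ j ∈ Finset.range (N+1), ((v (j+1) - v j)/h)^2 * ((g (j+1) - g j)/h))
        + (1/2) * ((v (N+1) - v N)/h)^2 * g (N+1)
        - (1/2) * ((v 1 - v 0)/h)^2 * g 0 := by
  have hne : h ≠ 0 := by rw [hh]; positivity
  set b : ℕ → ℝ := fun j ↦ ((v (j + 1) - v j) / h) ^ 2
  have hlhs : h * ∑ j ∈ Icc 1 N,
      g j * ((v (j+1) - 2*v j + v (j-1))/h^2) * ((v (j+1) - v (j-1))/(2*h))
        = (1/2) * ∑ j ∈ Icc 1 N, g j * (b j - b (j - 1)) := by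
    rw [mul_sum, mul_sum]
    refine sum_congr rfl fun j hj ↦ ?_
    obtain ⟨k, rfl⟩ : ∃ k, j = k + 1 := ⟨j - 1, by grind⟩
    rw [mul_assoc, mul_left_comm, mul_laplacian_mul_centered_diff _ _ _ _ hne]
    simp only [b, Nat.add_sub_cancel]
    ring
  have hrhs : h * ∑ j ∈ range (N + 1), ((v (j+1) - v j)/h)^2 * ((g (j+1) - g j)/h)
      = ∑ j ∈ range (N + 1), (g (j + 1) - g j) * b j := by
    rw [mul_sum]
    refine sum_congr rfl fun j _ ↦ ?_
    simp only [b]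
    field_simp
  rw [hlhs, hrhs, sum_Icc_mul_sub_pred_by_parts]
  ring

theorem stmt3 (N : ℕ) (h : ℝ) (hh : h = 1/(N+1)) (v g : ℕ → ℝ)
    (hv0 : v 0 = 0) (hvN : v (N+1) = 0) :
    h * ∑ j ∈ Finset.Icc 1 N, g j * ((v (j+1) - 2*v j + v (j-1))/h^2) * ((v (j+1) - v (j-1))/(2*h))
      = -(1/2) * (h * ∑ j ∈ Finset.range (N+1), ((v (j+1) - v j)/h)^2 * ((g (j+1) - g j)/h))
        + (1/2) * ((v (N+1) - v N)/h)^2 * g (N+1)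
        - (1/2) * ((v 1 - v 0)/h)^2 * g 0 :=
  stmt3_general N h hh v g
end

section
/- Let N ∈ ℕ, h = 1/(N+1), and let v, f, g be real discrete functions on {0,…,N+1} with v_0 = v_{N+1} = 0. Then h·∑_{j=0}^{N} ((v_{j+1}+v_j)/2)·((f_{j+1}−f_j)/h)·((g_{j+1}−g_j)/h) = h·∑_{j=1}^{N} v_j·((f_{j+1}−f_{j−1})/(2h))·((g_{j+1}−g_{j−1})/(2h)) + (h²/4)·h·∑_{j=1}^{N} v_j·((f_{j+1}−2f_j+f_{j−1})/h²)·((g_{j+1}−2g_j+g_{j−1})/h²). -/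
/-!
Summing by parts, the averaged weight `(v (j+1) + v j)/2` on the edge `[j, j+1]` is moved to the
nodes, so node `j` collects `(a c + b d)/2`, where `a, b` and `c, d` are the forward differences of
`f` and `g` on its two adjacent edges. The polarization identity
`2 (a c + b d) = (a + b)(c + d) + (a - b)(c - d)` then splits this into the product of centered
differences and the product of second differences.
-/

open Finset

theorem sum_range_edge_mul_eq_sum_Icc_node_mul {R : Type*} [NonUnitalNonAssocSemiring R]
    (N : ℕ) (v a : ℕ → R) (hv0 : v 0 = 0) (hvN : v (N + 1) = 0) :
    ∑ j ∈ range (N + 1), (v (j + 1) + v j) * a j = ∑ j ∈ Icc 1 N, v j * (a (j - 1) + a j) := by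
  have hright : ∑ j ∈ range (N + 1), v (j + 1) * a j = ∑ j ∈ range N, v (j + 1) * a j := by
    rw [sum_range_succ, hvN, zero_mul, add_zero]
  have hleft : ∑ j ∈ range (N + 1), v j * a j = ∑ j ∈ range N, v (j + 1) * a (j + 1) := by
    rw [sum_range_succ', hv0, zero_mul, add_zero]
  rw [← Finset.Ico_add_one_right_eq_Icc, sum_Ico_eq_sum_range, Nat.add_sub_cancel]
  simp only [add_mul, sum_add_distrib, hright, hleft, mul_add, add_comm 1, Nat.add_sub_cancel]

theorem two_mul_sum_midpoint_forward_diff_mul {R : Type*} [CommRing R]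
    (N : ℕ) (v f g : ℕ → R) (hv0 : v 0 = 0) (hvN : v (N + 1) = 0) :
    2 * ∑ j ∈ range (N + 1), (v (j + 1) + v j) * ((f (j + 1) - f j) * (g (j + 1) - g j))
      = ∑ j ∈ Icc 1 N, v j * ((f (j + 1) - f (j - 1)) * (g (j + 1) - g (j - 1))
          + (f (j + 1) - 2 * f j + f (j - 1)) * (g (j + 1) - 2 * g j + g (j - 1))) := by
  rw [sum_range_edge_mul_eq_sum_Icc_node_mul N v _ hv0 hvN, mul_sum]
  refine sum_congr rfl fun j hj => ?_
  obtain ⟨i, rfl⟩ : ∃ i, j = i + 1 := ⟨j - 1, by grind⟩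
  simp only [Nat.add_sub_cancel]
  ring

theorem stmt4_general (N : ℕ) (h : ℝ) (v f g : ℕ → ℝ)
    (hv0 : v 0 = 0) (hvN : v (N+1) = 0) :
    h * ∑ j ∈ Finset.range (N+1), ((v (j+1) + v j)/2) * ((f (j+1) - f j)/h) * ((g (j+1) - g j)/h)
      = h * ∑ j ∈ Finset.Icc 1 N, v j * ((f (j+1) - f (j-1))/(2*h)) * ((g (j+1) - g (j-1))/(2*h))
        + (h^2/4) * (h * ∑ j ∈ Finset.Icc 1 N,
            v j * ((f (j+1) - 2*f j + f (j-1))/h^2) * ((g (j+1) - 2*g j + g (j-1))/h^2)) := by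
  rcases eq_or_ne h 0 with rfl | hh
  · simp -- with `x / 0 = 0` both sides are `0`
  have hlhs : h * ∑ j ∈ range (N+1), ((v (j+1) + v j)/2) * ((f (j+1) - f j)/h) * ((g (j+1) - g j)/h)
      = (4 * h)⁻¹ * (2 * ∑ j ∈ range (N + 1),
          (v (j + 1) + v j) * ((f (j + 1) - f j) * (g (j + 1) - g j))) := by
    simp only [mul_sum]
    refine sum_congr rfl fun j _ => ?_
    field_simp
    ring
  rw [hlhs, two_mul_sum_midpoint_forward_diff_mul N v f g hv0 hvN]
  simp only [mul_sum, ← sum_add_distrib]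
  refine sum_congr rfl fun j _ => ?_
  field_simp
  ring

theorem stmt4 (N : ℕ) (h : ℝ) (hh : h = 1/(N+1)) (v f g : ℕ → ℝ)
    (hv0 : v 0 = 0) (hvN : v (N+1) = 0) :
    h * ∑ j ∈ Finset.range (N+1), ((v (j+1) + v j)/2) * ((f (j+1) - f j)/h) * ((g (j+1) - g j)/h)
      = h * ∑ j ∈ Finset.Icc 1 N, v j * ((f (j+1) - f (j-1))/(2*h)) * ((g (j+1) - g (j-1))/(2*h))
        + (h^2/4) * (h * ∑ j ∈ Finset.Icc 1 N,
            v j * ((f (j+1) - 2*f j + f (j-1))/h^2) * ((g (j+1) - 2*g j + g (j-1))/h^2)) :=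
  stmt4_general N h v f g hv0 hvN
end

section
/- Let N ∈ ℕ, h = 1/(N+1), and let v, g be real discrete functions on the 2-d grid {0,…,N+1}² with v vanishing on the boundary of the grid (i.e. v_{i,j} = 0 whenever i ∈ {0,N+1} or j ∈ {0,N+1}). Then h²·∑_{i,j=1}^{N} g_{i,j}·(Δ_{h,1}v)_{i,j}·(∂_{h,2}v)_{i,j} = (1/2)·h²·∑_{i=0}^{N}∑_{j=1}^{N} |(∂_{h,1}^+v)_{i,j}|²·(∂_{h,2}(m_{h,1}^+g))_{i,j} − h²·∑_{i=0}^{N}∑_{j=1}^{N} (∂_{h,1}^+v)_{i,j}·(m_{h,1}^+(∂_{h,2}v))_{i,j}·(∂_{h,1}^+g)_{i,j} − (h²/4)·h²·∑_{i=0}^{N}∑_{j=0}^{N} |(∂_{h,1}^+∂_{h,2}^+v)_{i,j}|²·(∂_{h,2}^+(m_{h,1}^+g))_{i,j}. -/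
/-!
Summation by parts in `i` moves one forward difference from `Δ_{h,1} v` onto `g ∂_{h,2} v`; the
discrete product rule splits the result into `m⁺_{h,1} g · ∂_{h,1}^+ ∂_{h,2} v` plus the second
term of the identity. The remaining sum `∑ G a (a_{j+1} - a_{j-1})`, with `a = ∂_{h,1}^+ v`, is the
discrete analogue of `∫ G (a²)' = -∫ G' a²`, exact up to the correction
`∑ (a_{j+1} - a_j)² (G_{j+1} - G_j)`, which is the `h²/4` term. Every term is `1/h` times an
`h`-free sum, so the identity is proved for the unscaled difference operators and then rescaled.
-/

open Finset

theorem mul_sum_sum_eq_mul_sum_sum {α β R : Type*} [NonUnitalNonAssocSemiring R] {s : Finset α}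
    {t : Finset β} {c d : R} {f f' : α → β → R} (hf : ∀ i ∈ s, ∀ j ∈ t, c * f i j = d * f' i j) :
    c * ∑ i ∈ s, ∑ j ∈ t, f i j = d * ∑ i ∈ s, ∑ j ∈ t, f' i j := by
  simp only [mul_sum]
  exact sum_congr rfl fun i hi => sum_congr rfl fun j hj => hf i hi j hj

section OneDimensional

variable {R : Type*} [CommRing R]

theorem sum_Icc_by_parts (N : ℕ) (f a : ℕ → R) :
    ∑ i ∈ Icc 1 N, f i * (a i - a (i - 1))
      = a N * f (N + 1) - a 0 * f 0 - ∑ i ∈ range (N + 1), a i * (f (i + 1) - f i) := by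
  induction N with
  | zero =>
    simp only [Order.lt_one_iff, Icc_eq_empty_of_lt, sum_empty, zero_add, range_one,
      sum_singleton]
    ring
  | succ n ih =>
    rw [sum_Icc_succ_top (by omega), sum_range_succ, ih, Nat.add_sub_cancel]
    ring

theorem sum_range_succ_eq_add_sum_Icc (N : ℕ) (f : ℕ → R) :
    ∑ j ∈ range (N + 1), f j = f 0 + ∑ j ∈ Icc 1 N, f j := by
  rw [range_eq_Ico, sum_eq_sum_Ico_succ_bot (by omega), Ico_add_one_right_eq_Icc]

theorem two_mul_sum_mul_mul_centralDiff (N : ℕ) (G a : ℕ → R) (h0 : a 0 = 0)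
    (hN : a (N + 1) = 0) :
    2 * ∑ j ∈ Icc 1 N, G j * a j * (a (j + 1) - a (j - 1))
      = ∑ j ∈ range (N + 1), (a (j + 1) - a j) ^ 2 * (G (j + 1) - G j)
        - ∑ j ∈ Icc 1 N, a j ^ 2 * (G (j + 1) - G (j - 1)) := by
  -- `ψ` is a primitive: the summand at `j ≥ 1` below is `ψ j - ψ (j - 1)`.
  set ψ : ℕ → R := fun k =>
    G (k + 1) * (2 * a k * a (k + 1) - a (k + 1) ^ 2) + G k * a (k + 1) ^ 2
  have htele : ∀ n, ∑ j ∈ Icc 1 n, (2 * (G j * a j * (a (j + 1) - a (j - 1)))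
      + a j ^ 2 * (G (j + 1) - G (j - 1)) - (a (j + 1) - a j) ^ 2 * (G (j + 1) - G j))
      = ψ n - ψ 0 := by
    intro n
    induction n with
    | zero => simp
    | succ n ih =>
      rw [sum_Icc_succ_top (by omega), ih, Nat.add_sub_cancel]
      ring
  have hψN : ψ N = 0 := by simp only [ψ, hN]; ring
  have hψ0 : ψ 0 = -((a 1 - a 0) ^ 2 * (G 1 - G 0)) := by simp only [ψ, h0]; ring
  have hsum := htele N
  rw [sum_sub_distrib, sum_add_distrib, ← mul_sum] at hsum
  rw [sum_range_succ_eq_add_sum_Icc]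
  linear_combination hsum + hψN - hψ0
end OneDimensional

namespace Grid

-- The operators of the statement without their powers of `h`: `∂_{h,1}^+ = dx / h`,
-- `∂_{h,2}^+ = dy / h`, `∂_{h,2} = cdy / (2h)`, `Δ_{h,1} = lapx / h²`, `m_{h,1}^+ = avgx`.
def dx (v : ℕ → ℕ → ℝ) (i j : ℕ) : ℝ := v (i + 1) j - v i j

def dy (v : ℕ → ℕ → ℝ) (i j : ℕ) : ℝ := v i (j + 1) - v i j

def cdy (v : ℕ → ℕ → ℝ) (i j : ℕ) : ℝ := v i (j + 1) - v i (j - 1)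

def lapx (v : ℕ → ℕ → ℝ) (i j : ℕ) : ℝ := v (i + 1) j - 2 * v i j + v (i - 1) j

noncomputable def avgx (g : ℕ → ℕ → ℝ) (i j : ℕ) : ℝ := (g (i + 1) j + g i j) / 2

def VanishesOnBoundary (N : ℕ) (v : ℕ → ℕ → ℝ) : Prop :=
  ∀ i j, i ≤ N + 1 → j ≤ N + 1 → (i = 0 ∨ i = N + 1 ∨ j = 0 ∨ j = N + 1) → v i j = 0

variable {N : ℕ} {v : ℕ → ℕ → ℝ}

namespace VanishesOnBoundary

variable {i j : ℕ}

theorem cdy_zero (hv : VanishesOnBoundary N v) (hj : j ≤ N) : cdy v 0 j = 0 := by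
  rw [cdy, hv 0 (j + 1) (by omega) (by omega) (by omega),
    hv 0 (j - 1) (by omega) (by omega) (by omega), sub_self]

theorem cdy_last (hv : VanishesOnBoundary N v) (hj : j ≤ N) : cdy v (N + 1) j = 0 := by
  rw [cdy, hv (N + 1) (j + 1) le_rfl (by omega) (by omega),
    hv (N + 1) (j - 1) le_rfl (by omega) (by omega), sub_self]

theorem dx_zero (hv : VanishesOnBoundary N v) (hi : i ≤ N) : dx v i 0 = 0 := by
  rw [dx, hv (i + 1) 0 (by omega) (by omega) (by omega), hv i 0 (by omega) (by omega) (by omega),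
    sub_self]

theorem dx_last (hv : VanishesOnBoundary N v) (hi : i ≤ N) : dx v i (N + 1) = 0 := by
  rw [dx, hv (i + 1) (N + 1) (by omega) le_rfl (by omega),
    hv i (N + 1) (by omega) le_rfl (by omega), sub_self]

end VanishesOnBoundary

theorem lapx_eq_dx_sub_dx {i : ℕ} (hi : 1 ≤ i) (j : ℕ) :
    lapx v i j = dx v i j - dx v (i - 1) j := by
  obtain ⟨k, rfl⟩ := Nat.exists_eq_add_of_le' hi
  simp only [lapx, dx, Nat.add_sub_cancel]
  ring

theorem mul_cdy_succ_sub_mul_cdy (g : ℕ → ℕ → ℝ) (i j : ℕ) :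
    g (i + 1) j * cdy v (i + 1) j - g i j * cdy v i j
      = avgx g i j * cdy (dx v) i j + avgx (cdy v) i j * dx g i j := by
  simp only [avgx, cdy, dx]
  ring

theorem sum_mul_lapx_mul_cdy (hv : VanishesOnBoundary N v) (g : ℕ → ℕ → ℝ) {j : ℕ}
    (hj : j ≤ N) :
    ∑ i ∈ Icc 1 N, g i j * lapx v i j * cdy v i j
      = -∑ i ∈ range (N + 1),
          dx v i j * (avgx g i j * cdy (dx v) i j + avgx (cdy v) i j * dx g i j) := by
  have hparts := sum_Icc_by_parts N (fun i => g i j * cdy v i j) (fun i => dx v i j)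
  simp only [hv.cdy_zero hj, hv.cdy_last hj, mul_zero, sub_zero, zero_sub, mul_cdy_succ_sub_mul_cdy]
    at hparts
  rw [← hparts]
  exact sum_congr rfl fun i hi => by rw [lapx_eq_dx_sub_dx (mem_Icc.1 hi).1]; ring

theorem two_mul_sum_mul_lapx_mul_cdy (hv : VanishesOnBoundary N v) (g : ℕ → ℕ → ℝ) :
    2 * ∑ i ∈ Icc 1 N, ∑ j ∈ Icc 1 N, g i j * lapx v i j * cdy v i j
      = ∑ i ∈ range (N + 1), ∑ j ∈ Icc 1 N, dx v i j ^ 2 * cdy (avgx g) i j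
        - 2 * ∑ i ∈ range (N + 1), ∑ j ∈ Icc 1 N, dx v i j * avgx (cdy v) i j * dx g i j
        - ∑ i ∈ range (N + 1), ∑ j ∈ range (N + 1), dy (dx v) i j ^ 2 * dy (avgx g) i j := by
  have hrow : ∀ i ∈ range (N + 1),
      2 * ∑ j ∈ Icc 1 N, avgx g i j * dx v i j * cdy (dx v) i j
        = ∑ j ∈ range (N + 1), dy (dx v) i j ^ 2 * dy (avgx g) i j
          - ∑ j ∈ Icc 1 N, dx v i j ^ 2 * cdy (avgx g) i j := fun i hi =>
    two_mul_sum_mul_mul_centralDiff N (avgx g i) (dx v i)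
      (hv.dx_zero (mem_range_succ_iff.1 hi)) (hv.dx_last (mem_range_succ_iff.1 hi))
  have hrows := sum_congr rfl hrow
  rw [← mul_sum, sum_sub_distrib] at hrows
  rw [sum_comm, sum_congr rfl fun j hj => sum_mul_lapx_mul_cdy hv g (mem_Icc.1 hj).2,
    sum_neg_distrib, sum_comm]
  simp only [mul_add, sum_add_distrib, ← mul_assoc, mul_comm (dx v _ _) (avgx g _ _)]
  linear_combination -hrows

end Grid

open Grid in
theorem stmt5 (N : ℕ) (h : ℝ) (hh : h = 1/(N+1)) (v g : ℕ → ℕ → ℝ)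
    (hbd : ∀ i j, i ≤ N+1 → j ≤ N+1 → (i = 0 ∨ i = N+1 ∨ j = 0 ∨ j = N+1) → v i j = 0) :
    h^2 * ∑ i ∈ Finset.Icc 1 N, ∑ j ∈ Finset.Icc 1 N,
        g i j * ((v (i+1) j - 2*v i j + v (i-1) j)/h^2) * ((v i (j+1) - v i (j-1))/(2*h))
      = (1/2) * (h^2 * ∑ i ∈ Finset.range (N+1), ∑ j ∈ Finset.Icc 1 N,
            ((v (i+1) j - v i j)/h)^2 *
              ((((g (i+1) (j+1) + g i (j+1))/2) - ((g (i+1) (j-1) + g i (j-1))/2))/(2*h)))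
        - h^2 * ∑ i ∈ Finset.range (N+1), ∑ j ∈ Finset.Icc 1 N,
            ((v (i+1) j - v i j)/h) *
              ((((v (i+1) (j+1) - v (i+1) (j-1))/(2*h)) + ((v i (j+1) - v i (j-1))/(2*h)))/2) *
              ((g (i+1) j - g i j)/h)
        - (h^2/4) * (h^2 * ∑ i ∈ Finset.range (N+1), ∑ j ∈ Finset.range (N+1),
            ((v (i+1) (j+1) - v i (j+1) - v (i+1) j + v i j)/h^2)^2 *
              (((g (i+1) (j+1) + g i (j+1))/2 - (g (i+1) j + g i j)/2)/h)) := by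
  have hh0 : h ≠ 0 := by rw [hh]; positivity
  calc h ^ 2 * ∑ i ∈ Icc 1 N, ∑ j ∈ Icc 1 N, g i j * (lapx v i j / h ^ 2) * (cdy v i j / (2 * h))
      = 1 / (4 * h) * (2 * ∑ i ∈ Icc 1 N, ∑ j ∈ Icc 1 N, g i j * lapx v i j * cdy v i j) := by
        rw [← mul_assoc]
        exact mul_sum_sum_eq_mul_sum_sum fun i _ j _ => by field_simp; ring
    _ = 1 / (4 * h) * (∑ i ∈ range (N + 1), ∑ j ∈ Icc 1 N, dx v i j ^ 2 * cdy (avgx g) i j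
          - 2 * ∑ i ∈ range (N + 1), ∑ j ∈ Icc 1 N, dx v i j * avgx (cdy v) i j * dx g i j
          - ∑ i ∈ range (N + 1), ∑ j ∈ range (N + 1), dy (dx v) i j ^ 2 * dy (avgx g) i j) := by
        rw [two_mul_sum_mul_lapx_mul_cdy hbd]
    _ = 1 / 2 * (h ^ 2 * ∑ i ∈ range (N + 1), ∑ j ∈ Icc 1 N,
            (dx v i j / h) ^ 2 * (cdy (avgx g) i j / (2 * h)))
        - h ^ 2 * ∑ i ∈ range (N + 1), ∑ j ∈ Icc 1 N,
            (dx v i j / h) * ((cdy v (i + 1) j / (2 * h) + cdy v i j / (2 * h)) / 2)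
              * (dx g i j / h)
        - h ^ 2 / 4 * (h ^ 2 * ∑ i ∈ range (N + 1), ∑ j ∈ range (N + 1),
            ((v (i + 1) (j + 1) - v i (j + 1) - v (i + 1) j + v i j) / h ^ 2) ^ 2
              * (dy (avgx g) i j / h)) := by
        rw [mul_sub, mul_sub]
        congr 1
        congr 1
        all_goals
          rw [← mul_assoc]
          refine mul_sum_sum_eq_mul_sum_sum fun i _ j _ => ?_
          simp only [avgx, cdy, dx, dy]
          field_simp
          ring
end

section
/- Let N ∈ ℕ, h = 1/(N+1). Define the discrete function w on the 2-d grid {1,…,N}² by w_{i,j} = (−1)^i if i = j and w_{i,j} = 0 if i ≠ j, extended by zero on the grid boundary. Then w is an eigenfunction of the 5-point discrete Laplacian with homogeneous Dirichlet boundary conditions: −Δ_h w = (4/h²)·w on the interior grid points, where (Δ_h w)_{i,j} = (w_{i+1,j} + w_{i−1,j} + w_{i,j+1} + w_{i,j−1} − 4w_{i,j})/h². -/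
/-!
On the diagonal the signs alternate, and the neighbours of an interior point `(i, j)` that lie on
the diagonal come in pairs: `(i + 1, j)` and `(i, j - 1)` when `j = i + 1`, `(i - 1, j)` and
`(i, j + 1)` when `j = i - 1`. The two points of a pair are consecutive diagonal points, so their
values cancel. Hence the four-neighbour sum vanishes and `Δ_h w = -(4 / h²) w`.
-/

def diagAlternating (N i j : ℕ) : ℝ :=
  if i = j ∧ 1 ≤ i ∧ i ≤ N then (-1) ^ i else 0

namespace diagAlternating

variable {N i j : ℕ}

theorem comm (N i j : ℕ) : diagAlternating N i j = diagAlternating N j i := by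
  unfold diagAlternating
  by_cases hij : i = j
  · subst hij; rfl
  · rw [if_neg (by omega), if_neg (by omega)]

theorem succ_left_add_pred_right (hi : 1 ≤ i) (hj : j ≤ N) :
    diagAlternating N (i + 1) j + diagAlternating N i (j - 1) = 0 := by
  unfold diagAlternating
  by_cases hij : j = i + 1
  · subst hij
    rw [if_pos ⟨rfl, by omega, hj⟩, if_pos ⟨by omega, hi, by omega⟩, pow_succ]
    ring
  · rw [if_neg (by omega), if_neg (by omega), add_zero]

theorem pred_left_add_succ_right (hi : i ≤ N) (hj : 1 ≤ j) :
    diagAlternating N (i - 1) j + diagAlternating N i (j + 1) = 0 := by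
  rw [comm N (i - 1), comm N i, add_comm]
  exact succ_left_add_pred_right hj hi

theorem neighbour_sum_eq_zero (hi : 1 ≤ i) (hi' : i ≤ N) (hj : 1 ≤ j) (hj' : j ≤ N) :
    diagAlternating N (i + 1) j + diagAlternating N (i - 1) j + diagAlternating N i (j + 1) +
      diagAlternating N i (j - 1) = 0 := by
  linear_combination succ_left_add_pred_right (N := N) hi hj' +
    pred_left_add_succ_right (N := N) hi' hj

end diagAlternating

theorem stmt6_general (N : ℕ) (h : ℝ)
    (w : ℕ → ℕ → ℝ)
    (hw : ∀ i j, w i j = if i = j ∧ 1 ≤ i ∧ i ≤ N then (-1:ℝ)^i else 0) :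
    ∀ i j, 1 ≤ i → i ≤ N → 1 ≤ j → j ≤ N →
      -((w (i+1) j + w (i-1) j + w i (j+1) + w i (j-1) - 4 * w i j)/h^2)
        = (4/h^2) * w i j := by
  obtain rfl : w = diagAlternating N := funext₂ hw
  intro i j hi hi' hj hj'
  rw [diagAlternating.neighbour_sum_eq_zero hi hi' hj hj']
  ring

theorem stmt6 (N : ℕ) (h : ℝ) (hh : h = 1/(N+1))
    (w : ℕ → ℕ → ℝ)
    (hw : ∀ i j, w i j = if i = j ∧ 1 ≤ i ∧ i ≤ N then (-1:ℝ)^i else 0) :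
    ∀ i j, 1 ≤ i → i ≤ N → 1 ≤ j → j ≤ N →
      -((w (i+1) j + w (i-1) j + w i (j+1) + w i (j-1) - 4 * w i j)/h^2)
        = (4/h^2) * w i j :=
  stmt6_general N h w hw
end

section
/- Let n ∈ ℕ with n ≥ 1 and set γ = 1 − 1/(2n). Define F(z) = (1/2π)·∫_{−∞}^{∞} e^{izξ}·e^{−ξ^{2n}} dξ for z ∈ ℂ. Then F is an even entire function, and there exist positive constants C₀, c₀, c₁, c₂ such that: (i) |F(z)| + |F'(z)| ≤ C₀·exp(c₀·|Im z|^{1/γ}) for all z ∈ ℂ; (ii) |F(z)| ≤ C₀·exp(−c₁·|z|^{1/γ}) for all z ∈ ℂ with |Im z| ≤ c₂·|Re z|. -/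
/-!
Write `m = 2n` and `q = m / (m - 1) = 1 / γ`, the exponent conjugate to `m`. On the real line
`|e^{i z ξ - ξ^m}| = e^{-ξ Im z - ξ^m}`, and Young's inequality `t |ξ| ≤ δ ξ^m + K t^q`
bounds `F` by `C e^{K |Im z|^q}`; differentiation under the integral sign shows that `F` is
entire, and Cauchy's estimate on unit circles passes the bound on to `F'`.

For the decay in a sector, the integrand is entire and negligible at the ends of horizontal
strips, so the line of integration may be moved to `Im ζ = h`. Since
`Re (ξ + i h)^m ≥ ξ^m / 2 - B |h|^m`, the choice `h = ε (Re z)^(q - 1)` (for `Re z ≥ 0`, the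
other half-plane following by evenness) produces a factor `e^{-ε (Re z)^q / 2}`, which dominates
the loss `e^{K |Im z|^q}` as soon as `|Im z| ≤ c₂ Re z` with `c₂` small.
-/

open MeasureTheory Complex Real Filter Set Topology

theorem norm_pow_sub_pow_le {R : Type*} [NormedCommRing R] [NormOneClass R] {a b : R} {M : ℝ}
    (ha : ‖a‖ ≤ M) (hb : ‖b‖ ≤ M) (m : ℕ) :
    ‖a ^ m - b ^ m‖ ≤ m * M ^ (m - 1) * ‖a - b‖ := by
  rw [← geom_sum₂_mul]
  refine (norm_mul_le _ _).trans (mul_le_mul_of_nonneg_right ?_ (norm_nonneg _))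
  calc ‖∑ i ∈ Finset.range m, a ^ i * b ^ (m - 1 - i)‖
      ≤ ∑ i ∈ Finset.range m, ‖a‖ ^ i * ‖b‖ ^ (m - 1 - i) := by
        refine (norm_sum_le _ _).trans (Finset.sum_le_sum fun i _ => ?_)
        exact (norm_mul_le _ _).trans (mul_le_mul (norm_pow_le _ _) (norm_pow_le _ _)
          (norm_nonneg _) (by positivity))
    _ ≤ ∑ i ∈ Finset.range m, M ^ (m - 1) := by
        refine Finset.sum_le_sum fun i hi => ?_
        rw [show m - 1 = i + (m - 1 - i) by grind, pow_add, Nat.add_sub_cancel_left]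
        have hM : 0 ≤ M := (norm_nonneg _).trans ha
        gcongr
    _ = m * M ^ (m - 1) := by simp

theorem exists_succ_mul_add_pow_mul_le (k : ℕ) :
    ∃ B ≥ 0, ∀ a b : ℝ, 0 ≤ a → 0 ≤ b →
      (k + 1) * (a + b) ^ k * b ≤ a ^ (k + 1) / 2 + B * b ^ (k + 1) := by
  set L : ℝ := 2 ^ (k + 1) * (k + 1)
  have hL : 1 ≤ L := one_le_mul_of_one_le_of_one_le (one_le_pow₀ one_le_two) (by simp)
  refine ⟨(k + 1) * (L + 1) ^ k, by positivity, fun a b ha hb => ?_⟩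
  rcases le_or_gt (L * b) a with hba | hab
  · have hb' : b ≤ a / L := by rwa [le_div_iff₀ (by linarith), mul_comm]
    have h2a : a + b ≤ 2 * a := by nlinarith
    calc (k + 1) * (a + b) ^ k * b ≤ (k + 1) * (2 * a) ^ k * (a / L) := by gcongr
      _ = a ^ (k + 1) / 2 := by simp only [L]; field_simp; ring
      _ ≤ _ := by simp only [le_add_iff_nonneg_right]; positivity
  · have hLb : a + b ≤ (L + 1) * b := by linarith
    calc (k + 1) * (a + b) ^ k * b ≤ (k + 1) * ((L + 1) * b) ^ k * b := by gcongr
      _ = (k + 1) * (L + 1) ^ k * b ^ (k + 1) := by rw [mul_pow]; ring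
      _ ≤ _ := by simp only [le_add_iff_nonneg_left]; positivity

theorem exists_half_pow_sub_le_re_pow {m : ℕ} (hm : m ≠ 0) (hme : Even m) :
    ∃ B ≥ 0, ∀ x y : ℝ, x ^ m / 2 - B * |y| ^ m ≤ ((x + y * I) ^ m).re := by
  obtain ⟨k, rfl⟩ : ∃ k, m = k + 1 := ⟨m - 1, by omega⟩
  obtain ⟨B, hB0, hB⟩ := exists_succ_mul_add_pow_mul_le k
  refine ⟨B, hB0, fun x y => ?_⟩
  have hdiff :
      ‖(x + y * I) ^ (k + 1) - (x : ℂ) ^ (k + 1)‖ ≤ (k + 1) * (|x| + |y|) ^ k * |y| := by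
    have hxy : ‖(x : ℂ) + y * I‖ ≤ |x| + |y| := by
      simpa using norm_add_le (x : ℂ) (y * I)
    have hx : ‖(x : ℂ)‖ ≤ |x| + |y| := by simp
    simpa using norm_pow_sub_pow_le hxy hx (k + 1)
  have hre := (abs_le.mp ((abs_re_le_norm _).trans hdiff)).1
  rw [sub_re, ← ofReal_pow, ofReal_re] at hre
  have := hB |x| |y| (abs_nonneg x) (abs_nonneg y)
  rw [hme.pow_abs] at this
  linarith

theorem exists_mul_abs_le_mul_pow_add_rpow {m : ℕ} (hm : 2 ≤ m) (hme : Even m) {δ : ℝ}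
    (hδ : 0 < δ) :
    ∃ K > 0, ∀ t, 0 ≤ t → ∀ x : ℝ, t * |x| ≤ δ * x ^ m + K * t ^ conjExponent m := by
  have hpq : (m : ℝ).HolderConjugate (conjExponent m) :=
    .conjExponent (by exact_mod_cast hm)
  -- Young's inequality for `(s |x|) * (t / s)`, with `s ^ m = δ m`
  set s := (δ * m) ^ (m : ℝ)⁻¹
  have hs : 0 < s := by positivity
  have hsm : s ^ m = δ * m := Real.rpow_inv_natCast_pow (by positivity) (by omega)
  have hq := hpq.symm.pos
  refine ⟨(s ^ conjExponent m * conjExponent m)⁻¹, by positivity, fun t ht x => ?_⟩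
  have := Real.young_inequality_of_nonneg (by positivity : 0 ≤ s * |x|)
    (by positivity : 0 ≤ t / s) hpq
  rw [Real.rpow_natCast, mul_pow, hsm, hme.pow_abs, Real.div_rpow ht hs.le] at this
  calc t * |x| = s * |x| * (t / s) := by field_simp
    _ ≤ _ := this
    _ = _ := by field_simp

theorem sq_le_pow_add_one {m : ℕ} (hm : 2 ≤ m) (hme : Even m) (x : ℝ) :
    x ^ 2 ≤ x ^ m + 1 := by
  rcases le_or_gt |x| 1 with hx | hx
  · have : x ^ 2 ≤ 1 := by rw [← sq_abs]; exact pow_le_one₀ (abs_nonneg x) hx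
    linarith [hme.pow_nonneg x]
  · have := pow_le_pow_right₀ hx.le hm
    rw [sq_abs, hme.pow_abs] at this
    linarith

theorem add_one_rpow_le {t q : ℝ} (ht : 0 ≤ t) (hq : 0 ≤ q) :
    (t + 1) ^ q ≤ 2 ^ q * (t ^ q + 1) := by
  calc (t + 1) ^ q ≤ (2 * max t 1) ^ q := by gcongr; linarith [le_max_left t 1, le_max_right t 1]
    _ = 2 ^ q * max t 1 ^ q := Real.mul_rpow zero_le_two (by positivity)
    _ ≤ 2 ^ q * (t ^ q + 1) := by
        gcongr
        rcases le_total t 1 with h | h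
        · rw [max_eq_right h, one_rpow]; linarith [rpow_nonneg ht q]
        · rw [max_eq_left h]; linarith

theorem integrable_exp_mul_abs_sub_mul_pow {m : ℕ} (hm : 2 ≤ m) (hme : Even m) (a : ℝ)
    {δ : ℝ} (hδ : 0 < δ) : Integrable fun x : ℝ => rexp (a * |x| - δ * x ^ m) := by
  obtain ⟨K, -, hK⟩ := exists_mul_abs_le_mul_pow_add_rpow hm hme (half_pos hδ)
  refine ((integrable_exp_neg_mul_sq (half_pos hδ)).const_mul
    (rexp (K * |a| ^ conjExponent m + δ / 2))).mono' (by fun_prop) (ae_of_all _ fun x => ?_)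
  rw [norm_of_nonneg (exp_pos _).le, ← Real.exp_add]
  gcongr
  have := hK |a| (abs_nonneg a) x
  have := mul_le_mul_of_nonneg_left (sq_le_pow_add_one hm hme x) hδ.le
  nlinarith [mul_le_mul_of_nonneg_right (le_abs_self a) (abs_nonneg x)]

theorem integrable_exp_neg_mul_pow {m : ℕ} (hm : 2 ≤ m) (hme : Even m) {δ : ℝ}
    (hδ : 0 < δ) :
    Integrable fun x : ℝ => rexp (-(δ * x ^ m)) := by
  simpa using integrable_exp_mul_abs_sub_mul_pow hm hme 0 hδ

theorem tendsto_exp_mul_sub_pow_add_atTop_nhds_zero {m : ℕ} (hm : 2 ≤ m) (hme : Even m)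
    {a : ℝ} (ha : 0 ≤ a) (D : ℝ) :
    Tendsto (fun s : ℝ => rexp (a * s - s ^ m / 2 + D)) atTop (𝓝 0) := by
  obtain ⟨K, -, hK⟩ :=
    exists_mul_abs_le_mul_pow_add_rpow hm hme (by norm_num : (0 : ℝ) < 1 / 4)
  refine tendsto_exp_atBot.comp (tendsto_atBot_mono' _ ?_ (tendsto_atBot_add_const_left _
    (K * a ^ conjExponent m + D) (tendsto_neg_atTop_atBot.comp
      ((tendsto_pow_atTop (by omega : m ≠ 0)).atTop_div_const (by norm_num : (0 : ℝ) < 4)))))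
  filter_upwards [eventually_ge_atTop 0] with s hs
  have := hK a ha s
  rw [abs_of_nonneg hs] at this
  simp only [Function.comp_apply]
  linarith

theorem abs_im_le_abs_im_add_of_norm_sub_le {w z : ℂ} {r : ℝ} (h : ‖w - z‖ ≤ r) :
    |w.im| ≤ |z.im| + r := by
  have := (abs_im_le_norm (w - z)).trans h
  rw [sub_im] at this
  linarith [abs_sub_abs_le_abs_sub w.im z.im]

theorem integral_add_mul_I_eq_integral {E : Type*} [NormedAddCommGroup E] [NormedSpace ℂ E]
    [CompleteSpace E] {g : ℂ → E} (hg : Differentiable ℂ g) {h : ℝ}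
    (hint : Integrable fun x : ℝ => g x) (hint' : Integrable fun x : ℝ => g (x + h * I))
    {C : ℝ → ℝ} (hC : Tendsto C atTop (𝓝 0))
    (hbound : ∀ x y : ℝ, y ∈ uIoc 0 h → ‖g (x + y * I)‖ ≤ C |x|) :
    ∫ x : ℝ, g (x + h * I) = ∫ x : ℝ, g x := by
  set V : ℝ → E := fun s => ∫ y in (0 : ℝ)..h, g (s + y * I)
  have hVlim : ∀ σ : ℝ, |σ| = 1 → Tendsto (fun T : ℝ => V (σ * T)) atTop (𝓝 0) := by
    intro σ hσ
    refine squeeze_zero_norm' ?_ (by simpa using hC.mul_const |h|)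
    filter_upwards [eventually_ge_atTop 0] with T hT
    have := intervalIntegral.norm_integral_le_of_norm_le_const fun y hy => hbound (σ * T) y hy
    rwa [abs_mul, hσ, one_mul, abs_of_nonneg hT, sub_zero] at this
  have hrect : ∀ T : ℝ, ((∫ x in -T..T, g x) - ∫ x in -T..T, g (x + h * I)) +
      (I • V (1 * T) - I • V (-1 * T)) = 0 := by
    intro T
    have := integral_boundary_rect_eq_zero_of_differentiableOn g (-T) (T + h * I)
      hg.differentiableOn
    simp only [neg_re, ofReal_re, neg_im, ofReal_im, neg_zero, add_re, mul_re, I_re, mul_zero,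
      I_im, mul_one, sub_self, add_zero, add_im, mul_im, zero_add, ofReal_neg, ofReal_zero,
      zero_mul] at this
    rw [← this]
    simp only [V, one_mul, neg_one_mul, ofReal_neg]
    abel
  have hlim := ((intervalIntegral_tendsto_integral hint tendsto_neg_atTop_atBot tendsto_id).sub
    (intervalIntegral_tendsto_integral hint' tendsto_neg_atTop_atBot tendsto_id)).add
    (((hVlim 1 (by simp)).const_smul I).sub ((hVlim (-1) (by simp)).const_smul I))
  rw [smul_zero, sub_zero, add_zero] at hlim
  exact (sub_eq_zero.mp (tendsto_nhds_unique (hlim.congr hrect) tendsto_const_nhds)).symm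

theorem norm_deriv_le_of_norm_le_exp_abs_im_rpow {E : Type*} [NormedAddCommGroup E]
    [NormedSpace ℂ E] {f : ℂ → E} (hf : Differentiable ℂ f) {A K q : ℝ} (hK : 0 ≤ K)
    (hq : 0 ≤ q)
    (hbound : ∀ z, ‖f z‖ ≤ A * rexp (K * |z.im| ^ q)) (z : ℂ) :
    ‖deriv f z‖ ≤ A * rexp (2 ^ q * K) * rexp (2 ^ q * K * |z.im| ^ q) := by
  have hA : 0 ≤ A := nonneg_of_mul_nonneg_left ((norm_nonneg _).trans (hbound 0)) (exp_pos _)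
  refine (norm_deriv_le_of_forall_mem_sphere_norm_le one_pos hf.diffContOnCl
    fun w hw => (hbound w).trans ?_).trans_eq (div_one _)
  have hw : |w.im| ≤ |z.im| + 1 :=
    abs_im_le_abs_im_add_of_norm_sub_le (mem_sphere_iff_norm.mp hw).le
  have := add_one_rpow_le (abs_nonneg z.im) hq
  rw [mul_assoc, ← Real.exp_add]
  gcongr
  calc K * |w.im| ^ q ≤ K * (|z.im| + 1) ^ q := by gcongr
    _ ≤ _ := by nlinarith

noncomputable def fbiIntegrand (m : ℕ) (z ζ : ℂ) : ℂ := cexp (I * z * ζ) * cexp (-ζ ^ m)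

noncomputable def fbiIntegral (m : ℕ) (z : ℂ) : ℂ := ∫ ξ : ℝ, fbiIntegrand m z ξ

theorem differentiable_fbiIntegrand (m : ℕ) (z : ℂ) :
    Differentiable ℂ (fbiIntegrand m z) := by
  unfold fbiIntegrand
  fun_prop

theorem norm_fbiIntegrand_add_mul_I (m : ℕ) (z : ℂ) (x y : ℝ) :
    ‖fbiIntegrand m z (x + y * I)‖ = rexp (-(z.im * x) - z.re * y - ((x + y * I) ^ m).re) := by
  rw [fbiIntegrand, norm_mul, norm_exp, norm_exp, ← Real.exp_add]
  congr 1
  simp only [mul_re, mul_im, add_re, add_im, I_re, I_im, ofReal_re, ofReal_im, neg_re]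
  ring

theorem norm_fbiIntegrand_ofReal_le (m : ℕ) (z : ℂ) (x : ℝ) :
    ‖fbiIntegrand m z x‖ ≤ rexp (|z.im| * |x| - x ^ m) := by
  have := norm_fbiIntegrand_add_mul_I m z x 0
  rw [ofReal_zero, zero_mul, add_zero, ← ofReal_pow, ofReal_re] at this
  rw [this]
  gcongr
  linarith [neg_abs_le (z.im * x), abs_mul z.im x]

theorem exists_norm_fbiIntegrand_le {m : ℕ} (hm : m ≠ 0) (hme : Even m) :
    ∃ B ≥ 0, ∀ (z : ℂ) (x y : ℝ), ‖fbiIntegrand m z (x + y * I)‖ ≤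
      rexp (|z.im| * |x| - x ^ m / 2 + (B * |y| ^ m - z.re * y)) := by
  obtain ⟨B, hB0, hB⟩ := exists_half_pow_sub_le_re_pow hm hme
  refine ⟨B, hB0, fun z x y => ?_⟩
  rw [norm_fbiIntegrand_add_mul_I]
  gcongr
  linarith [hB x y, neg_abs_le (z.im * x), abs_mul z.im x]

theorem integrable_fbiIntegrand {m : ℕ} (hm : 2 ≤ m) (hme : Even m) (z : ℂ) :
    Integrable fun x : ℝ => fbiIntegrand m z x :=
  (integrable_exp_mul_abs_sub_mul_pow hm hme |z.im| one_pos).mono'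
    ((differentiable_fbiIntegrand m z).continuous.comp continuous_ofReal).aestronglyMeasurable
    (ae_of_all _ fun x => by simpa using norm_fbiIntegrand_ofReal_le m z x)

theorem integrable_fbiIntegrand_add_mul_I {m : ℕ} (hm : 2 ≤ m) (hme : Even m) (z : ℂ)
    (h : ℝ) :
    Integrable fun x : ℝ => fbiIntegrand m z (x + h * I) := by
  obtain ⟨B, -, hB⟩ := exists_norm_fbiIntegrand_le (by omega) hme
  refine ((integrable_exp_mul_abs_sub_mul_pow hm hme |z.im| one_half_pos).mul_const
    (rexp (B * |h| ^ m - z.re * h))).mono' (by unfold fbiIntegrand; fun_prop)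
    (ae_of_all _ fun x => ?_)
  rw [← Real.exp_add]
  convert hB z x h using 2
  ring

theorem fbiIntegral_eq_integral_add_mul_I {m : ℕ} (hm : 2 ≤ m) (hme : Even m) (z : ℂ)
    (h : ℝ) :
    fbiIntegral m z = ∫ x : ℝ, fbiIntegrand m z (x + h * I) := by
  obtain ⟨B, hB0, hB⟩ := exists_norm_fbiIntegrand_le (by omega) hme
  refine (integral_add_mul_I_eq_integral (differentiable_fbiIntegrand m z)
    (integrable_fbiIntegrand hm hme z) (integrable_fbiIntegrand_add_mul_I hm hme z h)
    (tendsto_exp_mul_sub_pow_add_atTop_nhds_zero hm hme (abs_nonneg z.im)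
      (B * |h| ^ m + |z.re| * |h|))
    fun x y hy => ?_).symm
  have hyh : |y| ≤ |h| := by simpa using abs_sub_left_of_mem_uIcc (uIoc_subset_uIcc hy)
  refine (hB z x y).trans (Real.exp_le_exp.mpr ?_)
  rw [hme.pow_abs x]
  gcongr
  linarith [neg_abs_le (z.re * y), abs_mul z.re y, mul_le_mul_of_nonneg_left hyh (abs_nonneg z.re),
    mul_le_mul_of_nonneg_left (pow_le_pow_left₀ (abs_nonneg y) hyh m) hB0]

theorem fbiIntegral_neg {m : ℕ} (hme : Even m) (z : ℂ) :
    fbiIntegral m (-z) = fbiIntegral m z := by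
  rw [fbiIntegral, ← integral_neg_eq_self]
  simp only [fbiIntegrand, ofReal_neg, hme.neg_pow, mul_neg, neg_mul, neg_neg, fbiIntegral]

theorem hasDerivAt_fbiIntegrand (m : ℕ) (w : ℂ) (x : ℝ) :
    HasDerivAt (fbiIntegrand m · x) (I * x * fbiIntegrand m w x) w := by
  have := ((((hasDerivAt_id' w).const_mul I).mul_const (x : ℂ)).cexp).mul_const
    (cexp (-(x : ℂ) ^ m))
  rw [mul_one] at this
  exact this.congr_deriv (by rw [fbiIntegrand]; ring)

theorem hasDerivAt_fbiIntegral {m : ℕ} (hm : 2 ≤ m) (hme : Even m) (z : ℂ) :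
    HasDerivAt (fbiIntegral m) (∫ x : ℝ, I * x * fbiIntegrand m z x) z := by
  refine (hasDerivAt_integral_of_dominated_loc_of_deriv_le (Metric.ball_mem_nhds z one_pos)
    (bound := fun x : ℝ => rexp ((|z.im| + 2) * |x| - 1 * x ^ m))
    (Eventually.of_forall fun w => (integrable_fbiIntegrand hm hme w).aestronglyMeasurable)
    (integrable_fbiIntegrand hm hme z) (by unfold fbiIntegrand; fun_prop)
    (ae_of_all _ fun x w hw => ?_) (integrable_exp_mul_abs_sub_mul_pow hm hme _ one_pos)
    (ae_of_all _ fun x w _ => hasDerivAt_fbiIntegrand m w x)).2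
  have hw : |w.im| ≤ |z.im| + 1 := abs_im_le_abs_im_add_of_norm_sub_le (mem_ball_iff_norm.mp hw).le
  have hx : |x| ≤ rexp |x| := by linarith [add_one_le_exp |x|]
  calc ‖I * x * fbiIntegrand m w x‖ ≤ rexp |x| * rexp (|w.im| * |x| - x ^ m) := by
        rw [norm_mul, norm_mul, norm_I, one_mul, norm_real, Real.norm_eq_abs]
        exact mul_le_mul hx (norm_fbiIntegrand_ofReal_le m w x) (norm_nonneg _) (exp_pos _).le
    _ ≤ rexp ((|z.im| + 2) * |x| - 1 * x ^ m) := by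
        rw [← Real.exp_add]
        gcongr
        nlinarith [abs_nonneg x]

theorem differentiable_fbiIntegral {m : ℕ} (hm : 2 ≤ m) (hme : Even m) :
    Differentiable ℂ (fbiIntegral m) :=
  fun z => (hasDerivAt_fbiIntegral hm hme z).differentiableAt

theorem norm_fbiIntegral_le {m : ℕ} (hm : 2 ≤ m) (hme : Even m) {z : ℂ} {h c δ : ℝ}
    (hδ : 0 < δ)
    (hbound : ∀ x : ℝ, ‖fbiIntegrand m z (x + h * I)‖ ≤ rexp (c - δ * x ^ m)) :
    ‖fbiIntegral m z‖ ≤ (∫ x : ℝ, rexp (-(δ * x ^ m))) * rexp c := by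
  rw [fbiIntegral_eq_integral_add_mul_I hm hme z h, ← integral_mul_const]
  refine norm_integral_le_of_norm_le ((integrable_exp_neg_mul_pow hm hme hδ).mul_const _)
    (ae_of_all _ fun x => (hbound x).trans_eq ?_)
  rw [← Real.exp_add]
  ring_nf

theorem exists_norm_fbiIntegral_le {m : ℕ} (hm : 2 ≤ m) (hme : Even m) :
    ∃ A > 0, ∃ K > 0, ∀ z : ℂ,
      ‖fbiIntegral m z‖ ≤ A * rexp (K * |z.im| ^ conjExponent m) := by
  obtain ⟨K, hK, hYoung⟩ := exists_mul_abs_le_mul_pow_add_rpow hm hme one_half_pos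
  refine ⟨_, integral_exp_pos (integrable_exp_neg_mul_pow hm hme one_half_pos), K, hK,
    fun z => norm_fbiIntegral_le hm hme (h := 0) one_half_pos fun x => ?_⟩
  rw [ofReal_zero, zero_mul, add_zero]
  refine (norm_fbiIntegrand_ofReal_le m z x).trans (exp_le_exp.mpr ?_)
  linarith [hYoung |z.im| (abs_nonneg _) x]

theorem exists_norm_fbiIntegral_add_norm_deriv_le {m : ℕ} (hm : 2 ≤ m) (hme : Even m) :
    ∃ A > 0, ∃ K > 0, ∀ z : ℂ,
      ‖fbiIntegral m z‖ + ‖deriv (fbiIntegral m) z‖ ≤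
        A * rexp (K * |z.im| ^ conjExponent m) := by
  obtain ⟨A, hA, K, hK, hbound⟩ := exists_norm_fbiIntegral_le hm hme
  set q := conjExponent m
  have hq : 1 < q := (Real.HolderConjugate.conjExponent (by exact_mod_cast hm)).symm.lt
  have hKq : K ≤ 2 ^ q * K := le_mul_of_one_le_left hK.le (one_le_rpow one_le_two (by linarith))
  refine ⟨A + A * rexp (2 ^ q * K), by positivity, 2 ^ q * K, by positivity, fun z => ?_⟩
  have hderiv := norm_deriv_le_of_norm_le_exp_abs_im_rpow (differentiable_fbiIntegral hm hme)
    hK.le (by linarith) hbound z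
  have hexp : A * rexp (K * |z.im| ^ q) ≤ A * rexp (2 ^ q * K * |z.im| ^ q) := by gcongr
  linarith [hbound z]

theorem exists_norm_fbiIntegral_le_of_abs_im_le_re {m : ℕ} (hm : 2 ≤ m) (hme : Even m) :
    ∃ A > 0, ∃ c > 0, ∃ c₂ > 0, ∀ z : ℂ, |z.im| ≤ c₂ * z.re →
      ‖fbiIntegral m z‖ ≤ A * rexp (-c * z.re ^ conjExponent m) := by
  set q := conjExponent m
  have hpq : (m : ℝ).HolderConjugate q := .conjExponent (by exact_mod_cast hm)
  obtain ⟨B, hB0, hB⟩ := exists_norm_fbiIntegrand_le (by omega) hme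
  have hquarter : (0 : ℝ) < 1 / 4 := by norm_num
  obtain ⟨K, hK, hYoung⟩ := exists_mul_abs_le_mul_pow_add_rpow hm hme hquarter
  set ε := 1 / (2 * B + 2)
  have hε : 0 < ε := by positivity
  have hε1 : ε ≤ 1 := by rw [div_le_one (by positivity)]; linarith
  have hBε : B * ε ≤ 1 / 2 := by
    rw [mul_one_div, div_le_iff₀ (by positivity)]; linarith
  set c₂ := min 1 (ε / (4 * K))
  refine ⟨_, integral_exp_pos (integrable_exp_neg_mul_pow hm hme hquarter),
    ε / 4, by positivity, c₂, by positivity, fun z hz => ?_⟩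
  set R := z.re
  have hR : 0 ≤ R := nonneg_of_mul_nonneg_right ((abs_nonneg _).trans hz) (by positivity)
  -- On the line `Im ζ = h := ε R ^ (q - 1)` the factor `e^{i z ζ}` gains `e^{-ε R^q}`, while by
  -- the choice of `ε` the factor `e^{-ζ^m}` loses at most `e^{ε R^q / 2}`.
  set h := ε * R ^ (q - 1)
  have hRh : R * h = ε * R ^ q := by
    rw [mul_left_comm, mul_comm R, ← rpow_add_one' hR (by linarith [hpq.symm.lt]), sub_add_cancel]
  have hhm : B * |h| ^ m ≤ ε / 2 * R ^ q := by
    have hqm : (q - 1) * m = q := by linarith [hpq.mul_eq_add]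
    rw [abs_of_nonneg (by positivity), mul_pow, ← rpow_mul_natCast hR, hqm]
    have := pow_le_pow_of_le_one hε.le hε1 hm
    calc B * (ε ^ m * R ^ q) ≤ B * (ε ^ 2 * R ^ q) := by gcongr
      _ = B * ε * ε * R ^ q := by ring
      _ ≤ 1 / 2 * ε * R ^ q := by gcongr
      _ = ε / 2 * R ^ q := by ring
  have hq : 0 ≤ q := hpq.symm.nonneg
  have hKim : K * |z.im| ^ q ≤ ε / 4 * R ^ q := by
    calc K * |z.im| ^ q ≤ K * (c₂ ^ q * R ^ q) := by
          rw [← mul_rpow (by positivity) hR]; gcongr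
      _ ≤ K * (c₂ * R ^ q) := by
          gcongr; exact rpow_le_self_of_le_one (by positivity) (min_le_left _ _) hpq.symm.lt.le
      _ ≤ ε / 4 * R ^ q := by
          rw [← mul_assoc]; gcongr
          calc K * c₂ ≤ K * (ε / (4 * K)) := by gcongr; exact min_le_right _ _
            _ = ε / 4 := by field_simp
  refine norm_fbiIntegral_le hm hme (h := h) (by norm_num) fun x => (hB z x h).trans ?_
  gcongr
  linarith [hYoung |z.im| (abs_nonneg _) x]

theorem exists_norm_fbiIntegral_le_of_abs_im_le {m : ℕ} (hm : 2 ≤ m) (hme : Even m) :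
    ∃ A > 0, ∃ c₁ > 0, ∃ c₂ > 0, ∀ z : ℂ, |z.im| ≤ c₂ * |z.re| →
      ‖fbiIntegral m z‖ ≤ A * rexp (-c₁ * ‖z‖ ^ conjExponent m) := by
  obtain ⟨A, hA, c, hc, c₂, hc₂, hbound⟩ :=
    exists_norm_fbiIntegral_le_of_abs_im_le_re hm hme
  set q := conjExponent m
  have hq : 0 < q := (Real.HolderConjugate.conjExponent (by exact_mod_cast hm)).symm.pos
  refine ⟨A, hA, c / 2 ^ q, by positivity, min c₂ 1, by positivity, fun z hz => ?_⟩
  obtain ⟨w, hwre, hwim, hwz, hw⟩ : ∃ w : ℂ,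
      w.re = |z.re| ∧ |w.im| = |z.im| ∧ ‖w‖ = ‖z‖ ∧ fbiIntegral m w = fbiIntegral m z := by
    rcases le_total 0 z.re with h | h
    · exact ⟨z, abs_of_nonneg h |>.symm, rfl, rfl, rfl⟩
    · exact ⟨-z, by simp [abs_of_nonpos h], by simp, norm_neg z, fbiIntegral_neg hme z⟩
  have hz2 : ‖z‖ ≤ 2 * |z.re| := by
    linarith [norm_le_abs_re_add_abs_im z, hz.trans (mul_le_of_le_one_left (abs_nonneg _)
      (min_le_right c₂ 1))]
  rw [← hw]
  refine (hbound w ?_).trans ?_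
  · rw [hwim, hwre]; exact hz.trans (by gcongr; exact min_le_left _ _)
  · refine mul_le_mul_of_nonneg_left (exp_le_exp.mpr ?_) hA.le
    rw [neg_mul, neg_mul, neg_le_neg_iff, hwre, ← hwz]
    calc c / 2 ^ q * ‖w‖ ^ q ≤ c / 2 ^ q * (2 * |z.re|) ^ q := by gcongr; rwa [hwz]
      _ = c * |z.re| ^ q := by rw [mul_rpow zero_le_two (abs_nonneg _)]; field_simp

theorem stmt8 (n : ℕ) (hn : 1 ≤ n) (γ : ℝ) (hγ : γ = 1 - 1/(2*n))
    (F : ℂ → ℂ)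
    (hF : ∀ z, F z = (1/(2*Real.pi)) *
      ∫ ξ : ℝ, Complex.exp (Complex.I * z * ξ) * Complex.exp (-(ξ:ℂ)^(2*n))) :
    (∀ z, F (-z) = F z) ∧ Differentiable ℂ F ∧
    ∃ C₀ > (0:ℝ), ∃ c₀ > (0:ℝ), ∃ c₁ > (0:ℝ), ∃ c₂ > (0:ℝ),
      (∀ z : ℂ, ‖F z‖ + ‖deriv F z‖
          ≤ C₀ * Real.exp (c₀ * |z.im| ^ (1/γ))) ∧
      (∀ z : ℂ, |z.im| ≤ c₂ * |z.re| →
          ‖F z‖ ≤ C₀ * Real.exp (-c₁ * ‖z‖ ^ (1/γ))) := by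
  have hm : 2 ≤ 2 * n := by omega
  have hme : Even (2 * n) := even_two_mul n
  have hγq : 1 / γ = conjExponent (2 * n : ℕ) := by
    rw [hγ, conjExponent]
    field_simp
    push_cast
    ring
  set c : ℂ := 1 / (2 * π)
  obtain rfl : F = fun z => c * fbiIntegral (2 * n) z := funext hF
  have hc : 0 < ‖c‖ := norm_pos_iff.mpr (by simp [c, pi_ne_zero])
  obtain ⟨A₁, hA₁, c₀, hc₀, hbound₁⟩ := exists_norm_fbiIntegral_add_norm_deriv_le hm hme
  obtain ⟨A₂, hA₂, c₁, hc₁, c₂, hc₂, hbound₂⟩ :=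
    exists_norm_fbiIntegral_le_of_abs_im_le hm hme
  have hdiff := differentiable_fbiIntegral hm hme
  refine ⟨fun z => congrArg (c * ·) (fbiIntegral_neg hme z), hdiff.const_mul c,
    ‖c‖ * (A₁ + A₂), by positivity, c₀, hc₀, c₁, hc₁, c₂, hc₂, fun z => ?_, fun z hz => ?_⟩
  · rw [deriv_const_mul _ (hdiff z), norm_mul, norm_mul, ← mul_add, hγq, mul_assoc]
    gcongr
    exact (hbound₁ z).trans (by gcongr; linarith)
  · rw [norm_mul, hγq, mul_assoc]
    gcongr
    exact (hbound₂ z hz).trans (by gcongr; linarith)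
end

section
/- Let N ∈ ℕ, h = 1/(N+1), and let w_h be a real discrete function on {0,…,N+1}² vanishing on the grid boundary. Define the symmetric (odd-reflection) extension w̃_h on the grid (hℤ)² ∩ (−1,2)² by w̃_h(x₁,−x₂) = −w_h(x₁,x₂), w̃_h(x₁, 2−x₂) = −w_h(x₁,x₂), w̃_h(−x₁,x₂) = −w̃_h(x₁,x₂), w̃_h(2−x₁,x₂) = −w̃_h(x₁,x₂) for grid points, and similarly extend g_h by zero on the original boundary. If −Δ_h w_h = g_h at all interior points of the original grid, then −Δ_h w̃_h = g̃_h at all interior grid points of (−1,2)². -/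
/-!
Reflection across a grid line `j = c` maps the five-point stencil centred at `(i, j)` onto the
stencil centred at `(i, 2c - j)`, so odd reflections of `W` and `G` carry the discrete equation
to the reflected point. On a reflection line itself both sides vanish, since an odd function is
zero there. Hence the equation holds on the closed square, and reflecting first in `j`, then in
`i`, spreads it over the whole enlarged grid.
-/

open Function

/-- The five-point stencil `h² Δ_h` on the lattice `ℤ²`. -/
def discreteLaplacian (W : ℤ → ℤ → ℝ) (i j : ℤ) : ℝ :=
  W (i + 1) j + W (i - 1) j + W i (j + 1) + W i (j - 1) - 4 * W i j

def DiscretePoissonAt (h : ℝ) (W G : ℤ → ℤ → ℝ) (i j : ℤ) : Prop :=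
  -(discreteLaplacian W i j / h ^ 2) = G i j

/-- Oddness under the reflection `j ↦ 2c - j` in the second coordinate. -/
def IsOddAbout (c : ℤ) (F : ℤ → ℤ → ℝ) : Prop :=
  ∀ i j, F i (2 * c - j) = -F i j

def IsOddAcrossEdges (c : ℤ) (F : ℤ → ℤ → ℝ) : Prop :=
  IsOddAbout 0 F ∧ IsOddAbout c F ∧ IsOddAbout 0 (swap F) ∧ IsOddAbout c (swap F)

section

variable {h : ℝ} {c : ℤ} {F W G : ℤ → ℤ → ℝ} {i j : ℤ}

theorem IsOddAbout.apply_self (hF : IsOddAbout c F) (i : ℤ) : F i c = 0 := by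
  have := hF i c
  rw [show 2 * c - c = c by ring] at this
  linarith

theorem IsOddAbout.discreteLaplacian (hW : IsOddAbout c W) :
    IsOddAbout c (discreteLaplacian W) := by
  intro i j
  unfold _root_.discreteLaplacian
  rw [show 2 * c - j + 1 = 2 * c - (j - 1) by ring, show 2 * c - j - 1 = 2 * c - (j + 1) by ring]
  rw [hW (i + 1) j, hW (i - 1) j, hW i (j - 1), hW i (j + 1), hW i j]
  ring

theorem discreteLaplacian_swap (W : ℤ → ℤ → ℝ) (i j : ℤ) :
    discreteLaplacian (swap W) j i = discreteLaplacian W i j := by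
  simp only [discreteLaplacian, swap]
  ring

theorem discretePoissonAt_swap :
    DiscretePoissonAt h (swap W) (swap G) j i ↔ DiscretePoissonAt h W G i j := by
  rw [DiscretePoissonAt, DiscretePoissonAt, discreteLaplacian_swap]

theorem DiscretePoissonAt.reflect (hW : IsOddAbout c W) (hG : IsOddAbout c G)
    (hP : DiscretePoissonAt h W G i j) : DiscretePoissonAt h W G i (2 * c - j) := by
  rw [DiscretePoissonAt, hW.discreteLaplacian, hG, ← hP]
  ring

theorem discretePoissonAt_of_isOddAbout (hW : IsOddAbout c W) (hG : IsOddAbout c G) (i : ℤ) :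
    DiscretePoissonAt h W G i c := by
  rw [DiscretePoissonAt, hW.discreteLaplacian.apply_self, hG.apply_self]
  simp

theorem DiscretePoissonAt.extend_snd (hW₀ : IsOddAbout 0 W) (hWc : IsOddAbout c W)
    (hG₀ : IsOddAbout 0 G) (hGc : IsOddAbout c G)
    (hP : ∀ j, 0 ≤ j → j ≤ c → DiscretePoissonAt h W G i j)
    (hj : -c < j) (hj' : j < 2 * c) : DiscretePoissonAt h W G i j := by
  rcases lt_or_ge j 0 with hneg | hnonneg
  · have := (hP (-j) (by omega) (by omega)).reflect hW₀ hG₀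
    rwa [show 2 * 0 - -j = j by ring] at this
  rcases le_or_gt j c with hle | hgt
  · exact hP j hnonneg hle
  · have := (hP (2 * c - j) (by omega) (by omega)).reflect hWc hGc
    rwa [show 2 * c - (2 * c - j) = j by ring] at this

theorem DiscretePoissonAt.of_interior (hW : IsOddAcrossEdges c W) (hG : IsOddAcrossEdges c G)
    (hint : ∀ i j, 0 < i → i < c → 0 < j → j < c → DiscretePoissonAt h W G i j)
    (hi : 0 ≤ i) (hi' : i ≤ c) (hj : 0 ≤ j) (hj' : j ≤ c) :
    DiscretePoissonAt h W G i j := by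
  obtain ⟨hW₀, hWc, hW₀', hWc'⟩ := hW
  obtain ⟨hG₀, hGc, hG₀', hGc'⟩ := hG
  rcases (show i = 0 ∨ i = c ∨ (0 < i ∧ i < c) by omega) with rfl | rfl | ⟨hi, hi'⟩
  · exact discretePoissonAt_swap.1 (discretePoissonAt_of_isOddAbout hW₀' hG₀' j)
  · exact discretePoissonAt_swap.1 (discretePoissonAt_of_isOddAbout hWc' hGc' j)
  rcases (show j = 0 ∨ j = c ∨ (0 < j ∧ j < c) by omega) with rfl | rfl | ⟨hj, hj'⟩
  · exact discretePoissonAt_of_isOddAbout hW₀ hG₀ i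
  · exact discretePoissonAt_of_isOddAbout hWc hGc i
  exact hint i j hi hi' hj hj'

theorem DiscretePoissonAt.of_isOddAcrossEdges (hW : IsOddAcrossEdges c W)
    (hG : IsOddAcrossEdges c G)
    (hint : ∀ i j, 0 < i → i < c → 0 < j → j < c → DiscretePoissonAt h W G i j)
    (hi : -c < i) (hi' : i < 2 * c) (hj : -c < j) (hj' : j < 2 * c) :
    DiscretePoissonAt h W G i j := by
  refine discretePoissonAt_swap.1 (extend_snd hW.2.2.1 hW.2.2.2 hG.2.2.1 hG.2.2.2 ?_ hi hi')
  intro i hi hi'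
  refine discretePoissonAt_swap.2 (extend_snd hW.1 hW.2.1 hG.1 hG.2.1 ?_ hj hj')
  intro j hj hj'
  exact of_interior hW hG hint hi hi' hj hj'

end

theorem discreteLaplacian_natCast {W : ℤ → ℤ → ℝ} {w : ℕ → ℕ → ℝ} {a b : ℕ}
    (ha : 1 ≤ a) (hb : 1 ≤ b)
    (hWw : ∀ i j : ℕ, i ≤ a + 1 → j ≤ b + 1 → W i j = w i j) :
    discreteLaplacian W a b =
      w (a + 1) b + w (a - 1) b + w a (b + 1) + w a (b - 1) - 4 * w a b := by
  rw [discreteLaplacian, show (a : ℤ) + 1 = ((a + 1 : ℕ) : ℤ) by push_cast; ring,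
    show (a : ℤ) - 1 = ((a - 1 : ℕ) : ℤ) by omega,
    show (b : ℤ) + 1 = ((b + 1 : ℕ) : ℤ) by push_cast; ring,
    show (b : ℤ) - 1 = ((b - 1 : ℕ) : ℤ) by omega, hWw (a + 1) b (by omega) (by omega),
    hWw (a - 1) b (by omega) (by omega), hWw a (b + 1) (by omega) (by omega),
    hWw a (b - 1) (by omega) (by omega), hWw a b (by omega) (by omega)]

theorem stmt19_general (N : ℕ) (h : ℝ)
    (w g : ℕ → ℕ → ℝ) (W G : ℤ → ℤ → ℝ)
    (heq : ∀ i j : ℕ, 1 ≤ i → i ≤ N → 1 ≤ j → j ≤ N →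
      -((w (i+1) j + w (i-1) j + w i (j+1) + w i (j-1) - 4*w i j)/h^2) = g i j)
    (hWw : ∀ i j : ℕ, i ≤ N+1 → j ≤ N+1 → W (i:ℤ) (j:ℤ) = w i j)
    (hGg : ∀ i j : ℕ, 1 ≤ i → i ≤ N → 1 ≤ j → j ≤ N → G (i:ℤ) (j:ℤ) = g i j)
    (hW1 : ∀ i j : ℤ, W i (-j) = -W i j)
    (hW2 : ∀ i j : ℤ, W i (2*((N:ℤ)+1) - j) = -W i j)
    (hW3 : ∀ i j : ℤ, W (-i) j = -W i j)
    (hW4 : ∀ i j : ℤ, W (2*((N:ℤ)+1) - i) j = -W i j)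
    (hG1 : ∀ i j : ℤ, G i (-j) = -G i j)
    (hG2 : ∀ i j : ℤ, G i (2*((N:ℤ)+1) - j) = -G i j)
    (hG3 : ∀ i j : ℤ, G (-i) j = -G i j)
    (hG4 : ∀ i j : ℤ, G (2*((N:ℤ)+1) - i) j = -G i j) :
    ∀ i j : ℤ, -((N:ℤ)+1) < i → i < 2*((N:ℤ)+1) → -((N:ℤ)+1) < j → j < 2*((N:ℤ)+1) →
      -((W (i+1) j + W (i-1) j + W i (j+1) + W i (j-1) - 4*W i j)/h^2) = G i j := by
  have hW : IsOddAcrossEdges ((N : ℤ) + 1) W :=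
    ⟨fun i j => by simpa using hW1 i j, hW2, fun j i => by simpa [swap] using hW3 i j,
      fun j i => hW4 i j⟩
  have hG : IsOddAcrossEdges ((N : ℤ) + 1) G :=
    ⟨fun i j => by simpa using hG1 i j, hG2, fun j i => by simpa [swap] using hG3 i j,
      fun j i => hG4 i j⟩
  have hint : ∀ i j : ℤ, 0 < i → i < (N : ℤ) + 1 → 0 < j → j < (N : ℤ) + 1 →
      DiscretePoissonAt h W G i j := by
    intro i j hi hi' hj hj'
    lift i to ℕ using hi.le
    lift j to ℕ using hj.le
    rw [DiscretePoissonAt, discreteLaplacian_natCast (by omega) (by omega)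
      (fun a b ha hb => hWw a b (by omega) (by omega)),
      hGg i j (by omega) (by omega) (by omega) (by omega)]
    exact heq i j (by omega) (by omega) (by omega) (by omega)
  intro i j hi hi' hj hj'
  exact DiscretePoissonAt.of_isOddAcrossEdges hW hG hint hi hi' hj hj'

theorem stmt19 (N : ℕ) (h : ℝ) (hh : h = 1/(N+1))
    (w g : ℕ → ℕ → ℝ) (W G : ℤ → ℤ → ℝ)
    (hwbd : ∀ i j, i ≤ N+1 → j ≤ N+1 → (i = 0 ∨ i = N+1 ∨ j = 0 ∨ j = N+1) → w i j = 0)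
    (heq : ∀ i j : ℕ, 1 ≤ i → i ≤ N → 1 ≤ j → j ≤ N →
      -((w (i+1) j + w (i-1) j + w i (j+1) + w i (j-1) - 4*w i j)/h^2) = g i j)
    (hWw : ∀ i j : ℕ, i ≤ N+1 → j ≤ N+1 → W (i:ℤ) (j:ℤ) = w i j)
    (hGg : ∀ i j : ℕ, 1 ≤ i → i ≤ N → 1 ≤ j → j ≤ N → G (i:ℤ) (j:ℤ) = g i j)
    (hG0 : ∀ i j : ℤ, 0 ≤ i → i ≤ (N:ℤ)+1 → 0 ≤ j → j ≤ (N:ℤ)+1 →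
      (i = 0 ∨ i = (N:ℤ)+1 ∨ j = 0 ∨ j = (N:ℤ)+1) → G i j = 0)
    (hW1 : ∀ i j : ℤ, W i (-j) = -W i j)
    (hW2 : ∀ i j : ℤ, W i (2*((N:ℤ)+1) - j) = -W i j)
    (hW3 : ∀ i j : ℤ, W (-i) j = -W i j)
    (hW4 : ∀ i j : ℤ, W (2*((N:ℤ)+1) - i) j = -W i j)
    (hG1 : ∀ i j : ℤ, G i (-j) = -G i j)
    (hG2 : ∀ i j : ℤ, G i (2*((N:ℤ)+1) - j) = -G i j)
    (hG3 : ∀ i j : ℤ, G (-i) j = -G i j)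
    (hG4 : ∀ i j : ℤ, G (2*((N:ℤ)+1) - i) j = -G i j) :
    ∀ i j : ℤ, -((N:ℤ)+1) < i → i < 2*((N:ℤ)+1) → -((N:ℤ)+1) < j → j < 2*((N:ℤ)+1) →
      -((W (i+1) j + W (i-1) j + W i (j+1) + W i (j-1) - 4*W i j)/h^2) = G i j :=
  stmt19_general N h w g W G heq hWw hGg hW1 hW2 hW3 hW4 hG1 hG2 hG3 hG4
end
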